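/- For n≥2, the group G presented by generators s_1,…,s_n, a, f and relations: s_is_j=s_js_i for |i−j|≥2; s_is_{i+1}s_i=s_{i+1}s_is_{i+1} for 1≤i≤n−1; s_ia=as_i for 2≤i≤n−1; s_1as_1=as_1a; s_nas_n=as_na; fs_if^{-1}=s_{i+1} for 1≤i≤n−1; fs_nf^{-1}=a; faf^{-1}=s_1, is isomorphic to the B-type braid group B(B_{n+1}) via the map sending s_i ↦ σ_i, a ↦ a_{n+1} and f ↦ φ_{n+1}, where φ_{n+1} = tσ_1⋯σ_n and a_{n+1} = φ_{n+1}σ_nφ_{n+1}^{-1}. -/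

import Mathlib

/-- Relators of the `B`-type braid group `B(B_{n+1})`: generator `some i` (`i : Fin n`)
stands for `σ_{i+1}`, and `none` stands for `t`. -/
def braidRelsB (n : ℕ) : Set (FreeGroup (Option (Fin n))) :=
  { r | (∃ i j : Fin n, (i : ℕ) + 2 ≤ (j : ℕ) ∧
          r = FreeGroup.of (some i) * FreeGroup.of (some j) *
              (FreeGroup.of (some j) * FreeGroup.of (some i))⁻¹) ∨
        (∃ i j : Fin n, (j : ℕ) = (i : ℕ) + 1 ∧
          r = FreeGroup.of (some i) * FreeGroup.of (some j) * FreeGroup.of (some i) *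
              (FreeGroup.of (some j) * FreeGroup.of (some i) * FreeGroup.of (some j))⁻¹) ∨
        (∃ i : Fin n, 1 ≤ (i : ℕ) ∧
          r = FreeGroup.of (some i) * FreeGroup.of none *
              (FreeGroup.of none * FreeGroup.of (some i))⁻¹) ∨
        (∃ i : Fin n, (i : ℕ) = 0 ∧
          r = FreeGroup.of (some i) * FreeGroup.of none * FreeGroup.of (some i) *
              FreeGroup.of none *
              (FreeGroup.of none * FreeGroup.of (some i) * FreeGroup.of none *
                FreeGroup.of (some i))⁻¹) }

/-- The `B`-type braid group `B(B_{n+1})`, with generators `σ_1, …, σ_n` and `t`. -/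
abbrev BraidB (n : ℕ) : Type := PresentedGroup (braidRelsB n)

/-- `φ_{n+1} = t σ_1 σ_2 ⋯ σ_n` in `B(B_{n+1})`. -/
noncomputable def phiB (n : ℕ) : BraidB n :=
  PresentedGroup.of none *
    ((List.finRange n).map fun i => (PresentedGroup.of (some i) : BraidB n)).prod

/-- `a_{n+1} = φ_{n+1} σ_n φ_{n+1}⁻¹` in `B(B_{n+1})`. -/
noncomputable def aB (n : ℕ) (h : 0 < n) : BraidB n :=
  phiB n * PresentedGroup.of (some (⟨n - 1, by omega⟩ : Fin n)) * (phiB n)⁻¹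

/-- Relators of the alternative presentation of `B(B_{n+1})`, on generators
`Sum.inl i` (`i : Fin n`, standing for `s_{i+1}`), `Sum.inr false` (standing for `a`) and
`Sum.inr true` (standing for `f`). -/
def gRels (n : ℕ) : Set (FreeGroup (Fin n ⊕ Bool)) :=
  { r | (∃ i j : Fin n, (i : ℕ) + 2 ≤ (j : ℕ) ∧
          r = FreeGroup.of (Sum.inl i) * FreeGroup.of (Sum.inl j) *
              (FreeGroup.of (Sum.inl j) * FreeGroup.of (Sum.inl i))⁻¹) ∨
        (∃ i j : Fin n, (j : ℕ) = (i : ℕ) + 1 ∧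
          r = FreeGroup.of (Sum.inl i) * FreeGroup.of (Sum.inl j) * FreeGroup.of (Sum.inl i) *
              (FreeGroup.of (Sum.inl j) * FreeGroup.of (Sum.inl i) *
                FreeGroup.of (Sum.inl j))⁻¹) ∨
        (∃ i : Fin n, 1 ≤ (i : ℕ) ∧ (i : ℕ) + 2 ≤ n ∧
          r = FreeGroup.of (Sum.inl i) * FreeGroup.of (Sum.inr false) *
              (FreeGroup.of (Sum.inr false) * FreeGroup.of (Sum.inl i))⁻¹) ∨
        (∃ i : Fin n, ((i : ℕ) = 0 ∨ (i : ℕ) + 1 = n) ∧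
          r = FreeGroup.of (Sum.inl i) * FreeGroup.of (Sum.inr false) *
              FreeGroup.of (Sum.inl i) *
              (FreeGroup.of (Sum.inr false) * FreeGroup.of (Sum.inl i) *
                FreeGroup.of (Sum.inr false))⁻¹) ∨
        (∃ i j : Fin n, (j : ℕ) = (i : ℕ) + 1 ∧
          r = FreeGroup.of (Sum.inr true) * FreeGroup.of (Sum.inl i) *
              (FreeGroup.of (Sum.inr true))⁻¹ * (FreeGroup.of (Sum.inl j))⁻¹) ∨
        (∃ i : Fin n, (i : ℕ) + 1 = n ∧
          r = FreeGroup.of (Sum.inr true) * FreeGroup.of (Sum.inl i) *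
              (FreeGroup.of (Sum.inr true))⁻¹ * (FreeGroup.of (Sum.inr false))⁻¹) ∨
        (∃ i : Fin n, (i : ℕ) = 0 ∧
          r = FreeGroup.of (Sum.inr true) * FreeGroup.of (Sum.inr false) *
              (FreeGroup.of (Sum.inr true))⁻¹ * (FreeGroup.of (Sum.inl i))⁻¹) }

/-!
Write `S = σ_1 ⋯ σ_n` and `φ = t S`. The braid relations alone give `S σ_i S⁻¹ = σ_{i+1}`
for `i < n` and `σ_1 S² = S² σ_n`. Hence, for any `x` commuting with `σ_2, …, σ_n`,
conjugation by `x S` sends `σ_i ↦ σ_{i+1}` exactly when `x` commutes with `σ_{i+1}`, and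
`σ_1 (x S)² = (x S)² σ_n` exactly when `σ_1 x σ_1 x = x σ_1 x σ_1`. Applied to `x = t`
this gives the relations of `f = φ` and `a = φ σ_n φ⁻¹` (those involving `a` are
conjugates by `φ` of braid relations); applied to `x = f S⁻¹` it recovers the relations
of `t` from those of `f`.
-/

namespace BraidTypeB

section Monoid

variable {M : Type*} [Monoid M]

def rangeProd (σ : ℕ → M) (a l : ℕ) : M := ((List.range' a l).map σ).prod

lemma rangeProd_succ (σ : ℕ → M) (a l : ℕ) :
    rangeProd σ a (l + 1) = σ a * rangeProd σ (a + 1) l := by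
  simp [rangeProd, List.range'_succ]

lemma rangeProd_add (σ : ℕ → M) (a l₁ l₂ : ℕ) :
    rangeProd σ a (l₁ + l₂) = rangeProd σ a l₁ * rangeProd σ (a + l₁) l₂ := by
  simp only [rangeProd, ← List.range'_append_1, List.map_append, List.prod_append]

lemma commute_rangeProd {x : M} {σ : ℕ → M} {a l : ℕ}
    (h : ∀ j, a ≤ j → j < a + l → Commute x (σ j)) : Commute x (rangeProd σ a l) := by
  refine Commute.list_prod_right _ _ fun y hy => ?_
  obtain ⟨j, hj, rfl⟩ := List.mem_map.mp hy
  rw [List.mem_range'_1] at hj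
  exact h j hj.1 hj.2

lemma map_rangeProd {N : Type*} [Monoid N] (F : M →* N) (σ : ℕ → M) (a l : ℕ) :
    F (rangeProd σ a l) = rangeProd (fun i => F (σ i)) a l := by
  simp [rangeProd, map_list_prod, Function.comp_def]

structure IsBraidFamily (n : ℕ) (σ : ℕ → M) : Prop where
  commute : ∀ i j, i + 2 ≤ j → j < n → Commute (σ i) (σ j)
  braid : ∀ i, i + 1 < n → σ i * σ (i + 1) * σ i = σ (i + 1) * σ i * σ (i + 1)

namespace IsBraidFamily

variable {n : ℕ} {σ : ℕ → M} (hσ : IsBraidFamily n σ)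
include hσ

lemma rangeProd_mul {i : ℕ} (hi : i + 1 < n) :
    rangeProd σ 0 n * σ i = σ (i + 1) * rangeProd σ 0 n := by
  obtain ⟨m, rfl⟩ : ∃ m, n = i + 2 + m := ⟨n - (i + 2), by omega⟩
  have hS : rangeProd σ 0 (i + 2 + m) =
      rangeProd σ 0 i * (σ i * σ (i + 1)) * rangeProd σ (i + 2) m := by
    rw [rangeProd_add, rangeProd_add]
    simp [rangeProd, List.range'_succ, mul_assoc]
  have hX : Commute (σ (i + 1)) (rangeProd σ 0 i) :=
    commute_rangeProd fun j _ hj => (hσ.commute j (i + 1) (by omega) (by omega)).symm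
  have hW : Commute (σ i) (rangeProd σ (i + 2) m) :=
    commute_rangeProd fun j hj _ => hσ.commute i j hj (by omega)
  rw [hS]
  calc rangeProd σ 0 i * (σ i * σ (i + 1)) * rangeProd σ (i + 2) m * σ i
      = rangeProd σ 0 i * (σ i * σ (i + 1) * σ i) * rangeProd σ (i + 2) m := by
        rw [mul_assoc _ _ (σ i), ← hW.eq]; simp only [mul_assoc]
    _ = σ (i + 1) * (rangeProd σ 0 i * (σ i * σ (i + 1)) * rangeProd σ (i + 2) m) := by
        rw [hσ.braid i hi, ← mul_assoc, ← mul_assoc, ← hX.eq]; simp only [mul_assoc]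

lemma mul_rangeProd_sq {k d : ℕ} (hkd : k + d < n) :
    σ k * rangeProd σ k (d + 1) ^ 2 = rangeProd σ k (d + 1) ^ 2 * σ (k + d) := by
  induction d generalizing k with
  | zero => simp [rangeProd, pow_two, mul_assoc]
  | succ d ih =>
    set P := rangeProd σ (k + 1) (d + 1)
    have hP : rangeProd σ k (d + 1 + 1) = σ k * P := rangeProd_succ σ k (d + 1)
    have hb := hσ.braid k (by omega)
    -- `P = σ (k+1) * R` with `R` commuting with `σ k`, so the braid relation moves `σ k` across
    have hsq : (σ k * P) ^ 2 = σ (k + 1) * σ k * P ^ 2 := by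
      have hR : Commute (σ k) (rangeProd σ (k + 2) d) :=
        commute_rangeProd fun j hj _ => hσ.commute k j hj (by omega)
      have hP' : P = σ (k + 1) * rangeProd σ (k + 2) d := rangeProd_succ σ (k + 1) d
      rw [hP']
      calc (σ k * (σ (k + 1) * rangeProd σ (k + 2) d)) ^ 2
          = σ k * σ (k + 1) * (rangeProd σ (k + 2) d * σ k) *
            (σ (k + 1) * rangeProd σ (k + 2) d) := by rw [pow_two]; simp only [mul_assoc]
        _ = (σ k * σ (k + 1) * σ k) * rangeProd σ (k + 2) d *
            (σ (k + 1) * rangeProd σ (k + 2) d) := by rw [← hR.eq]; simp only [mul_assoc]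
        _ = _ := by rw [hb, pow_two]; simp only [mul_assoc]
    have ih' : σ (k + 1) * P ^ 2 = P ^ 2 * σ (k + (d + 1)) := by
      rw [show k + (d + 1) = k + 1 + d by omega]
      exact ih (by omega)
    rw [hP, hsq]
    calc σ k * (σ (k + 1) * σ k * P ^ 2) = σ k * σ (k + 1) * σ k * P ^ 2 := by
          simp only [mul_assoc]
      _ = σ (k + 1) * σ k * (σ (k + 1) * P ^ 2) := by rw [hb]; simp only [mul_assoc]
      _ = σ (k + 1) * σ k * P ^ 2 * σ (k + (d + 1)) := by rw [ih']; simp only [mul_assoc]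

end IsBraidFamily

end Monoid

section Group

variable {G : Type*} [Group G] {n : ℕ} {σ : ℕ → G}

namespace IsBraidFamily

variable (hσ : IsBraidFamily n σ)
include hσ

lemma conj_mul_rangeProd_iff {i : ℕ} (hi : i + 1 < n) (x : G) :
    x * rangeProd σ 0 n * σ i * (x * rangeProd σ 0 n)⁻¹ = σ (i + 1) ↔
      Commute x (σ (i + 1)) := by
  have hconj :
      x * rangeProd σ 0 n * σ i * (x * rangeProd σ 0 n)⁻¹ = x * σ (i + 1) * x⁻¹ := by
    rw [mul_assoc x, hσ.rangeProd_mul hi]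
    group
  rw [hconj, mul_inv_eq_iff_eq_mul]
  rfl

lemma sq_mul_rangeProd_iff (hn : 0 < n) {x : G}
    (hx : ∀ j, 1 ≤ j → j < n → Commute x (σ j)) :
    σ 0 * (x * rangeProd σ 0 n) ^ 2 = (x * rangeProd σ 0 n) ^ 2 * σ (n - 1) ↔
      σ 0 * x * σ 0 * x = x * σ 0 * x * σ 0 := by
  obtain ⟨m, rfl⟩ : ∃ m, n = m + 1 := ⟨n - 1, by omega⟩
  set Q := rangeProd σ 1 m
  have hS : rangeProd σ 0 (m + 1) = σ 0 * Q := rangeProd_succ σ 0 m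
  have hxQ : Commute x Q := commute_rangeProd fun j hj hjm => hx j hj (by omega)
  have hQ : Q * σ 0 * Q * σ m = σ 0 * (Q * σ 0 * Q) := by
    have h := hσ.mul_rangeProd_sq (k := 0) (d := m) (by omega)
    rw [hS, zero_add, pow_two] at h
    apply mul_left_cancel (a := σ 0)
    simpa only [mul_assoc] using h.symm
  have hsq : (x * (σ 0 * Q)) ^ 2 = x * σ 0 * x * (Q * σ 0 * Q) := by
    rw [pow_two]
    calc x * (σ 0 * Q) * (x * (σ 0 * Q)) = x * σ 0 * (Q * x) * σ 0 * Q := by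
          simp only [mul_assoc]
      _ = x * σ 0 * x * (Q * σ 0 * Q) := by rw [← hxQ.eq]; simp only [mul_assoc]
  have hleft : σ 0 * (x * σ 0 * x * (Q * σ 0 * Q)) = σ 0 * x * σ 0 * x * (Q * σ 0 * Q) := by
    simp only [mul_assoc]
  have hright : x * σ 0 * x * (Q * σ 0 * Q) * σ m = x * σ 0 * x * σ 0 * (Q * σ 0 * Q) := by
    rw [mul_assoc _ (Q * σ 0 * Q), hQ]; simp only [mul_assoc]
  rw [hS, hsq, Nat.add_sub_cancel, hleft, hright, mul_left_inj]

variable {φ a : G} (hφ : ∀ i, i + 1 < n → φ * σ i * φ⁻¹ = σ (i + 1))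
  (ha : φ * a * φ⁻¹ = σ 0)
include hφ ha

lemma commute_of_conj_eq {i : ℕ} (hi : 1 ≤ i) (hin : i + 2 ≤ n) : Commute (σ i) a := by
  show σ i * a = a * σ i
  apply (MulAut.conj φ).injective
  simp only [map_mul, MulAut.conj_apply, hφ i (by omega), ha]
  exact (hσ.commute 0 (i + 1) (by omega) (by omega)).symm.eq

lemma braid_zero_of_conj_eq (hn : 2 ≤ n) : σ 0 * a * σ 0 = a * σ 0 * a := by
  apply (MulAut.conj φ).injective
  simp only [map_mul, MulAut.conj_apply, hφ 0 (by omega), ha]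
  exact (hσ.braid 0 (by omega)).symm

lemma braid_last_of_conj_eq (hn : 2 ≤ n) (hlast : φ * σ (n - 1) * φ⁻¹ = a) :
    σ (n - 1) * a * σ (n - 1) = a * σ (n - 1) * a := by
  apply (MulAut.conj φ).injective
  simp only [map_mul, MulAut.conj_apply, hlast, ha]
  exact (hσ.braid_zero_of_conj_eq hφ ha hn).symm

end IsBraidFamily

end Group


section ExtendOne

variable {M N : Type*} [Monoid M] [Monoid N] {n : ℕ}

def extendOne (g : Fin n → M) (i : ℕ) : M := if h : i < n then g ⟨i, h⟩ else 1

lemma extendOne_of_lt (g : Fin n → M) {i : ℕ} (h : i < n) : extendOne g i = g ⟨i, h⟩ :=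
  dif_pos h

lemma extendOne_coe (g : Fin n → M) (i : Fin n) : extendOne g i = g i :=
  extendOne_of_lt g i.isLt

lemma map_extendOne (F : M →* N) (g : Fin n → M) (i : ℕ) :
    F (extendOne g i) = extendOne (fun j => F (g j)) i := by
  unfold extendOne
  split_ifs <;> simp

lemma rangeProd_extendOne (g : Fin n → M) :
    rangeProd (extendOne g) 0 n = ((List.finRange n).map g).prod := by
  rw [rangeProd, ← List.range_eq_range', ← List.map_coe_finRange_eq_range, List.map_map]
  simp only [Function.comp_def, extendOne_coe]

lemma isBraidFamily_extendOne {g : Fin n → M}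
    (hc : ∀ i j : Fin n, (i : ℕ) + 2 ≤ j → g i * g j = g j * g i)
    (hb : ∀ i j : Fin n, (j : ℕ) = i + 1 → g i * g j * g i = g j * g i * g j) :
    IsBraidFamily n (extendOne g) where
  commute i j hij hj := by
    rw [extendOne_of_lt g (by omega), extendOne_of_lt g hj]
    exact hc _ _ hij
  braid i hi := by
    rw [extendOne_of_lt g (by omega : i < n), extendOne_of_lt g hi]
    exact hb _ _ rfl

end ExtendOne

open PresentedGroup

variable (n : ℕ)

-- `sigmaB n i` is `σ_{i+1}`: the generators are indexed from `0`, as `Fin n` is.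
def sigmaB : ℕ → BraidB n := extendOne fun i => of (some i)

lemma sigmaB_coe (i : Fin n) : sigmaB n i = of (some i) := extendOne_coe _ i

lemma isBraidFamily_sigmaB : IsBraidFamily n (sigmaB n) :=
  isBraidFamily_extendOne (fun i j h => mk_eq_mk_of_mul_inv_mem (Or.inl ⟨i, j, h, rfl⟩))
    fun i j h => mk_eq_mk_of_mul_inv_mem (Or.inr (Or.inl ⟨i, j, h, rfl⟩))

lemma commute_t_sigmaB {j : ℕ} (hj : 1 ≤ j) : Commute (of none : BraidB n) (sigmaB n j) := by
  unfold sigmaB extendOne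
  split_ifs with h
  · exact (mk_eq_mk_of_mul_inv_mem (Or.inr (Or.inr (Or.inl ⟨⟨j, h⟩, hj, rfl⟩)))).symm
  · exact Commute.one_right _

lemma sigmaB_t_sigmaB_t (hn : 0 < n) :
    sigmaB n 0 * of none * sigmaB n 0 * of none = of none * sigmaB n 0 * of none * sigmaB n 0 := by
  rw [sigmaB, extendOne_of_lt _ hn]
  exact mk_eq_mk_of_mul_inv_mem (Or.inr (Or.inr (Or.inr ⟨_, rfl, rfl⟩)))

lemma phiB_eq : phiB n = of none * rangeProd (sigmaB n) 0 n := by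
  rw [phiB, sigmaB, rangeProd_extendOne]

lemma aB_eq (hn : 0 < n) : aB n hn = phiB n * sigmaB n (n - 1) * (phiB n)⁻¹ := by
  rw [aB, sigmaB, extendOne_of_lt _ (by omega)]

lemma phiB_conj_sigmaB {i : ℕ} (hi : i + 1 < n) :
    phiB n * sigmaB n i * (phiB n)⁻¹ = sigmaB n (i + 1) := by
  rw [phiB_eq]
  exact ((isBraidFamily_sigmaB n).conj_mul_rangeProd_iff hi _).mpr (commute_t_sigmaB n (by omega))

lemma phiB_conj_aB (hn : 0 < n) : phiB n * aB n hn * (phiB n)⁻¹ = sigmaB n 0 := by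
  have h := ((isBraidFamily_sigmaB n).sq_mul_rangeProd_iff hn
    fun j hj _ => commute_t_sigmaB n hj).mpr (sigmaB_t_sigmaB_t n hn)
  rw [← phiB_eq] at h
  calc phiB n * aB n hn * (phiB n)⁻¹
      = phiB n ^ 2 * sigmaB n (n - 1) * (phiB n ^ 2)⁻¹ := by
        rw [aB_eq]; simp only [pow_two, mul_inv_rev, mul_assoc]
    _ = sigmaB n 0 := by rw [← h]; group

def sigmaG : ℕ → PresentedGroup (gRels n) := extendOne fun i => of (Sum.inl i)

lemma sigmaG_coe (i : Fin n) : sigmaG n i = of (Sum.inl i) := extendOne_coe _ i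

lemma isBraidFamily_sigmaG : IsBraidFamily n (sigmaG n) :=
  isBraidFamily_extendOne (fun i j h => mk_eq_mk_of_mul_inv_mem (Or.inl ⟨i, j, h, rfl⟩))
    fun i j h => mk_eq_mk_of_mul_inv_mem (Or.inr (Or.inl ⟨i, j, h, rfl⟩))

lemma f_conj_sigmaG {i : ℕ} (hi : i + 1 < n) :
    of (Sum.inr true) * sigmaG n i * (of (Sum.inr true))⁻¹ = sigmaG n (i + 1) := by
  rw [sigmaG, extendOne_of_lt _ (by omega), extendOne_of_lt _ hi]
  exact mk_eq_mk_of_mul_inv_mem (Or.inr (Or.inr (Or.inr (Or.inr (Or.inl ⟨_, _, rfl, rfl⟩)))))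

lemma f_conj_sigmaG_last (hn : 0 < n) :
    of (Sum.inr true) * sigmaG n (n - 1) * (of (Sum.inr true))⁻¹ = of (Sum.inr false) := by
  rw [sigmaG, extendOne_of_lt _ (by omega)]
  exact mk_eq_mk_of_mul_inv_mem
    (Or.inr (Or.inr (Or.inr (Or.inr (Or.inr (Or.inl ⟨_, by simp; omega, rfl⟩))))))

lemma f_conj_a (hn : 0 < n) :
    of (Sum.inr true) * of (Sum.inr false) * (of (Sum.inr true))⁻¹ = sigmaG n 0 := by
  rw [sigmaG, extendOne_of_lt _ hn]
  exact mk_eq_mk_of_mul_inv_mem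
    (Or.inr (Or.inr (Or.inr (Or.inr (Or.inr (Or.inr ⟨_, rfl, rfl⟩))))))

def tG : PresentedGroup (gRels n) := of (Sum.inr true) * (rangeProd (sigmaG n) 0 n)⁻¹

lemma tG_mul_rangeProd : tG n * rangeProd (sigmaG n) 0 n = of (Sum.inr true) :=
  inv_mul_cancel_right _ _

lemma commute_tG_sigmaG {j : ℕ} (hj : 1 ≤ j) (hjn : j < n) : Commute (tG n) (sigmaG n j) := by
  obtain ⟨i, rfl⟩ : ∃ i, j = i + 1 := ⟨j - 1, by omega⟩
  have h := (isBraidFamily_sigmaG n).conj_mul_rangeProd_iff hjn (tG n)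
  rw [tG_mul_rangeProd] at h
  exact h.mp (f_conj_sigmaG n hjn)

lemma sigmaG_tG_sigmaG_tG (hn : 0 < n) :
    sigmaG n 0 * tG n * sigmaG n 0 * tG n = tG n * sigmaG n 0 * tG n * sigmaG n 0 := by
  refine ((isBraidFamily_sigmaG n).sq_mul_rangeProd_iff hn
    fun j hj hjn => commute_tG_sigmaG n hj hjn).mp ?_
  rw [tG_mul_rangeProd]
  calc sigmaG n 0 * of (Sum.inr true) ^ 2
      = of (Sum.inr true) * of (Sum.inr false) * (of (Sum.inr true))⁻¹ *
          of (Sum.inr true) ^ 2 := by rw [f_conj_a n hn]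
    _ = of (Sum.inr true) * (of (Sum.inr true) * sigmaG n (n - 1) * (of (Sum.inr true))⁻¹) *
          of (Sum.inr true) := by rw [f_conj_sigmaG_last n hn]; group
    _ = of (Sum.inr true) ^ 2 * sigmaG n (n - 1) := by rw [pow_two]; group

noncomputable def toBraidBGen (hn : 0 < n) : Fin n ⊕ Bool → BraidB n
  | .inl i => of (some i)
  | .inr false => aB n hn
  | .inr true => phiB n

lemma toBraidBGen_rels (hn : 2 ≤ n) :
    ∀ r ∈ gRels n, FreeGroup.lift (toBraidBGen n (zero_lt_two.trans_le hn)) r = 1 := by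
  have hσ := isBraidFamily_sigmaB n
  have hφ : ∀ i, i + 1 < n → phiB n * sigmaB n i * (phiB n)⁻¹ = sigmaB n (i + 1) :=
    fun i hi => phiB_conj_sigmaB n hi
  have ha := phiB_conj_aB n (by omega)
  rintro r (⟨i, j, hij, rfl⟩ | ⟨i, j, hij, rfl⟩ | ⟨i, hi, hin, rfl⟩ |
    ⟨i, hi | hi, rfl⟩ | ⟨i, j, hij, rfl⟩ | ⟨i, hi, rfl⟩ | ⟨i, hi, rfl⟩) <;>
  simp only [map_mul, map_inv, FreeGroup.lift_apply_of, toBraidBGen, mul_inv_eq_one,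
    ← sigmaB_coe]
  · exact hσ.commute i j hij j.isLt
  · rw [hij]
    exact hσ.braid i (by omega)
  · exact (hσ.commute_of_conj_eq hφ ha hi (by omega)).eq
  · rw [hi]
    exact hσ.braid_zero_of_conj_eq hφ ha hn
  · rw [show (i : ℕ) = n - 1 by omega]
    exact hσ.braid_last_of_conj_eq hφ ha hn (aB_eq n _).symm
  · rw [hij]
    exact hφ i (by omega)
  · rw [show (i : ℕ) = n - 1 by omega, aB_eq]
  · rw [hi]
    exact ha

def ofBraidBGen : Option (Fin n) → PresentedGroup (gRels n)
  | some i => of (Sum.inl i)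
  | none => tG n

lemma ofBraidBGen_rels (hn : 0 < n) :
    ∀ r ∈ braidRelsB n, FreeGroup.lift (ofBraidBGen n) r = 1 := by
  have hσ := isBraidFamily_sigmaG n
  rintro r (⟨i, j, hij, rfl⟩ | ⟨i, j, hij, rfl⟩ | ⟨i, hi, rfl⟩ | ⟨i, hi, rfl⟩) <;>
  simp only [map_mul, map_inv, FreeGroup.lift_apply_of, ofBraidBGen, mul_inv_eq_one,
    ← sigmaG_coe]
  · exact hσ.commute i j hij j.isLt
  · rw [hij]
    exact hσ.braid i (by omega)
  · exact (commute_tG_sigmaG n hi i.isLt).symm.eq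
  · rw [hi]
    exact sigmaG_tG_sigmaG_tG n hn

noncomputable def toBraidB (hn : 2 ≤ n) : PresentedGroup (gRels n) →* BraidB n :=
  toGroup (toBraidBGen_rels n hn)

def ofBraidB (hn : 0 < n) : BraidB n →* PresentedGroup (gRels n) :=
  toGroup (ofBraidBGen_rels n hn)

lemma toBraidB_of (hn : 2 ≤ n) (x : Fin n ⊕ Bool) :
    toBraidB n hn (of x) = toBraidBGen n (zero_lt_two.trans_le hn) x :=
  toGroup.of _

lemma ofBraidB_of (hn : 0 < n) (x : Option (Fin n)) : ofBraidB n hn (of x) = ofBraidBGen n x :=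
  toGroup.of _

lemma ofBraidB_sigmaB (hn : 0 < n) (i : ℕ) : ofBraidB n hn (sigmaB n i) = sigmaG n i := by
  simp only [sigmaB, sigmaG, map_extendOne, ofBraidB_of, ofBraidBGen]

lemma toBraidB_sigmaG (hn : 2 ≤ n) (i : ℕ) : toBraidB n hn (sigmaG n i) = sigmaB n i := by
  simp only [sigmaB, sigmaG, map_extendOne, toBraidB_of, toBraidBGen]

lemma ofBraidB_phiB (hn : 0 < n) : ofBraidB n hn (phiB n) = of (Sum.inr true) := by
  simp only [phiB_eq, map_mul, map_rangeProd, ofBraidB_sigmaB, ofBraidB_of, ofBraidBGen]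
  exact tG_mul_rangeProd n

lemma toBraidB_tG (hn : 2 ≤ n) : toBraidB n hn (tG n) = of none := by
  simp only [tG, map_mul, map_inv, map_rangeProd, toBraidB_sigmaG, toBraidB_of, toBraidBGen]
  rw [phiB_eq]
  exact mul_inv_cancel_right _ _

lemma ofBraidB_comp_toBraidB (hn : 2 ≤ n) :
    (ofBraidB n (zero_lt_two.trans_le hn)).comp (toBraidB n hn) = MonoidHom.id _ := by
  refine PresentedGroup.ext fun x => ?_
  rw [MonoidHom.comp_apply, MonoidHom.id_apply, toBraidB_of]
  rcases x with i | _ | _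
  · exact ofBraidB_of n _ _
  · rw [toBraidBGen, aB_eq, map_mul, map_mul, map_inv, ofBraidB_phiB, ofBraidB_sigmaB,
      f_conj_sigmaG_last n (by omega)]
  · exact ofBraidB_phiB n _

lemma toBraidB_comp_ofBraidB (hn : 2 ≤ n) :
    (toBraidB n hn).comp (ofBraidB n (zero_lt_two.trans_le hn)) = MonoidHom.id _ := by
  refine PresentedGroup.ext fun x => ?_
  rw [MonoidHom.comp_apply, MonoidHom.id_apply, ofBraidB_of]
  rcases x with _ | i
  · exact toBraidB_tG n hn
  · exact toBraidB_of n hn _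

end BraidTypeB

theorem stmt_1 (n : ℕ) (hn : 2 ≤ n) :
    ∃ e : PresentedGroup (gRels n) ≃* BraidB n,
      (∀ i : Fin n, e (PresentedGroup.of (Sum.inl i)) = PresentedGroup.of (some i)) ∧
      e (PresentedGroup.of (Sum.inr false)) = aB n (by omega) ∧
      e (PresentedGroup.of (Sum.inr true)) = phiB n := by
  exact ⟨MonoidHom.toMulEquiv _ _ (BraidTypeB.ofBraidB_comp_toBraidB n hn)
      (BraidTypeB.toBraidB_comp_ofBraidB n hn),
    fun i => BraidTypeB.toBraidB_of n hn (.inl i), BraidTypeB.toBraidB_of n hn _,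
    BraidTypeB.toBraidB_of n hn _⟩
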